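/- arXiv:2107.02843 — 6 statements merged into one kernel-verified Lean document; each statement's English description precedes it below -/
import Mathlib

section
/- Let G be a group and (X,d) a proper metric space (i.e., closed bounded subsets of X are compact) equipped with an isometric G-action. Let D and D' be subsets of [0,∞) × X × G; for a point y = (s,x,g) of [0,∞) × X × G write s_y := s, x_y := x, g_y := g. Let H and H' be complex Hilbert spaces equipped with orthogonal decompositions (H_y)_{y∈D} of H and (H'_{y'})_{y'∈D'} of H', with orthogonal projections P_y and P'_{y'}. Assume: (a) every H_y and every H'_{y'} is finite dimensional; (b) for every n ∈ ℕ and every compact subset B of X the sets {y ∈ D : s_y ≤ n and x_y ∈ B} and {y' ∈ D' : s_{y'} ≤ n and x_{y'} ∈ B} are finite; (c) D ∪ D' is locally uniformly finite: for every compact B ⊆ X, every m ∈ ℕ and every finite F ⊆ G there is N ∈ ℕ such that for every (s,x,g) ∈ [0,∞) × X × G the set of z ∈ D ∪ D' with x_z ∈ B, |s_z − s| ≤ m, d(x_z,x) ≤ m, max(s,s_z)·d(x_z,x) ≤ m and g⁻¹g_z ∈ F has at most N elements. For a bounded continuous function f : X → ℂ let Φ(f) : H → H and Φ'(f) : H'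 → H' be the unique bounded operators with Φ(f)v = f(x_y)·v for v ∈ H_y and Φ'(f)w = f(x_{y'})·w for w ∈ H'_{y'}. Let A : H → H' be a bounded operator which is controlled, i.e., there exist m ∈ ℕ and a finite subset F of G such that P'_{y'} ∘ A ∘ P_y = 0 unless |s_y − s_{y'}| ≤ m, d(x_y,x_{y'}) ≤ m, max(s_y,s_{y'})·d(x_y,x_{y'}) ≤ m and g_y⁻¹g_{y'} ∈ F. Then for every continuous function f : X → ℂ vanishing at infinity, the operator Φ'(f) ∘ A − A ∘ Φ(f) is a compact operator from H to H'. -/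
open scoped NNReal

/-- An orthogonal decomposition of a complex Hilbert space indexed by `I`, presented by the
family of orthogonal projections onto its members: a family of mutually orthogonal
self-adjoint idempotents whose ranges have dense algebraic span. -/
structure OrthogonalDecomposition {I H : Type*} [NormedAddCommGroup H]
    [InnerProductSpace ℂ H] [CompleteSpace H] (P : I → (H →L[ℂ] H)) : Prop where
  isSelfAdjoint : ∀ i, IsSelfAdjoint (P i)
  idempotent : ∀ i, (P i).comp (P i) = P i
  orthogonal : ∀ i j, i ≠ j → (P i).comp (P j) = 0
  denseSpan : Dense (((⨆ i, LinearMap.range (P i : H →ₗ[ℂ] H)) : Submodule ℂ H) : Set H)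

/-!
Write `T_f := Φ'(f) ∘ A - A ∘ Φ(f)`; its `(y', y)` block is `(f(x_{y'}) - f(x_y)) A_{y'y}`.
Compact operators are norm closed, and `f` is uniformly close to a continuous compactly supported
`k` with `‖T_f - T_k‖ ≤ 2 ‖f - k‖_∞ ‖A‖`, so it suffices to show that `T_k` is compact.
Cutting `T_k` down to the finitely many columns `y` with `s_y ≤ n` and `x_y` in the compact
`m`-neighbourhood `B` of `supp k` leaves a finite-rank operator. The other nonzero blocks lie
over `B` and have `s_y > n`; control gives `max(s_y, s_{y'}) · d(x_y, x_{y'}) ≤ m`, so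
`d(x_y, x_{y'}) < m / n` and, by uniform continuity of `k`, their coefficients are uniformly small.
Local uniform finiteness bounds the number of such blocks in each row and column by a constant
`N` independent of `n`, and the Schur test makes the remainder small in norm.
-/

open scoped InnerProductSpace

namespace OrthogonalDecomposition

variable {I E : Type*} [NormedAddCommGroup E] [InnerProductSpace ℂ E] [CompleteSpace E]
  {P : I → E →L[ℂ] E}

lemma apply_apply_self (hP : OrthogonalDecomposition P) (i : I) (v : E) : P i (P i v) = P i v :=
  congr($(hP.idempotent i) v)

lemma apply_apply_of_ne (hP : OrthogonalDecomposition P) {i j : I} (hij : i ≠ j) (v : E) :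
    P i (P j v) = 0 :=
  congr($(hP.orthogonal i j hij) v)

lemma sum_apply_apply (hP : OrthogonalDecomposition P) [DecidableEq I] (S : Finset I) (j : I)
    (v : E) : (∑ i ∈ S, P i) (P j v) = if j ∈ S then P j v else 0 := by
  rw [sum_apply]
  split_ifs with hj
  · rw [Finset.sum_eq_single j (fun i _ hij => hP.apply_apply_of_ne hij v) (absurd hj),
      hP.apply_apply_self]
  · exact Finset.sum_eq_zero fun i hi => hP.apply_apply_of_ne (ne_of_mem_of_not_mem hi hj) v

lemma isStarProjection_sum (hP : OrthogonalDecomposition P) (S : Finset I) :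
    IsStarProjection (∑ i ∈ S, P i) := by
  classical
  induction S using Finset.induction_on with
  | empty => rw [Finset.sum_empty]; exact .zero _
  | insert j S hj ih =>
    rw [Finset.sum_insert hj]
    refine IsStarProjection.add ⟨hP.idempotent j, hP.isSelfAdjoint j⟩ ih ?_
    rw [Finset.mul_sum]
    exact Finset.sum_eq_zero fun i hi => hP.orthogonal j i (ne_of_mem_of_not_mem hi hj).symm

lemma norm_sum_apply_le (hP : OrthogonalDecomposition P) (S : Finset I) (v : E) :
    ‖(∑ i ∈ S, P i) v‖ ≤ ‖v‖ :=
  ((∑ i ∈ S, P i).le_opNorm v).trans <|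
    mul_le_of_le_one_left (norm_nonneg v) (hP.isStarProjection_sum S).norm_le

lemma norm_apply_le (hP : OrthogonalDecomposition P) (i : I) (v : E) : ‖P i v‖ ≤ ‖v‖ := by
  convert hP.norm_sum_apply_le {i} v; simp

lemma orthogonalFamily (hP : OrthogonalDecomposition P) :
    OrthogonalFamily ℂ (fun i => LinearMap.range (P i : E →ₗ[ℂ] E))
      (fun i => (LinearMap.range (P i : E →ₗ[ℂ] E)).subtypeₗᵢ) := by
  rintro i j hij ⟨_, v, rfl⟩ ⟨_, w, rfl⟩
  change ⟪P i v, P j w⟫_ℂ = 0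
  have hsymm := (hP.isSelfAdjoint i).isSymmetric v (P j w)
  rw [ContinuousLinearMap.coe_coe] at hsymm
  rw [hsymm, hP.apply_apply_of_ne hij, inner_zero_right]

lemma hasSum_apply (hP : OrthogonalDecomposition P) (v : E) : HasSum (fun i => P i v) v := by
  classical
  refine Metric.tendsto_nhds.2 fun ε hε => ?_
  obtain ⟨u, hu, hvu⟩ := hP.denseSpan.exists_dist_lt v (half_pos hε)
  obtain ⟨S₀, hu⟩ := Submodule.mem_iSup_iff_exists_finset.1 hu
  obtain ⟨μ, rfl⟩ := (Submodule.mem_iSup_finset_iff_exists_sum _ u).1 hu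
  filter_upwards [Filter.eventually_ge_atTop S₀] with S hS
  have hQu : (∑ i ∈ S, P i) (∑ i ∈ S₀, (μ i : E)) = ∑ i ∈ S₀, (μ i : E) := by
    refine (map_sum _ _ _).trans (Finset.sum_congr rfl fun i hi => ?_)
    obtain ⟨w, hw⟩ := (μ i).2
    rw [← hw, ContinuousLinearMap.coe_coe, hP.sum_apply_apply, if_pos (hS hi)]
  set u := ∑ i ∈ S₀, (μ i : E)
  rw [dist_eq_norm] at hvu ⊢
  calc ‖∑ i ∈ S, P i v - v‖ = ‖(∑ i ∈ S, P i) (v - u) - (v - u)‖ := by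
        rw [map_sub, hQu, sum_apply]; abel_nf
    _ ≤ ‖v - u‖ + ‖v - u‖ := (norm_sub_le _ _).trans (add_le_add_left (hP.norm_sum_apply_le S _) _)
    _ < ε := by linarith

lemma hasSum_norm_sq (hP : OrthogonalDecomposition P) (v : E) :
    HasSum (fun i => ‖P i v‖ ^ 2) (‖v‖ ^ 2) := by
  refine (((continuous_norm.pow 2).tendsto v).comp (hP.hasSum_apply v)).congr fun S => ?_
  exact hP.orthogonalFamily.norm_sum (fun i => ⟨P i v, LinearMap.mem_range_self _ v⟩) S

end OrthogonalDecomposition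

def IsDiagonalOperator {I E : Type*} [NormedAddCommGroup E] [InnerProductSpace ℂ E]
    (P : I → E →L[ℂ] E) (b : I → ℂ) (Φ : E →L[ℂ] E) : Prop :=
  ∀ i v, Φ (P i v) = b i • P i v

namespace IsDiagonalOperator

variable {I E : Type*} [NormedAddCommGroup E] [InnerProductSpace ℂ E]
  {P : I → E →L[ℂ] E} {b c : I → ℂ} {Φ Ψ : E →L[ℂ] E}

lemma sub (hΦ : IsDiagonalOperator P b Φ) (hΨ : IsDiagonalOperator P c Ψ) :
    IsDiagonalOperator P (b - c) (Φ - Ψ) := fun i v => by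
  rw [sub_apply, hΦ, hΨ, Pi.sub_apply, sub_smul]

section Complete

variable [CompleteSpace E]

lemma apply_apply (hP : OrthogonalDecomposition P) (hΦ : IsDiagonalOperator P b Φ) (i : I)
    (v : E) : P i (Φ v) = b i • P i v := by
  have hsum := ((hP.hasSum_apply v).mapL Φ).mapL (P i)
  refine hsum.unique ?_
  convert hasSum_single (f := fun j => P i (Φ (P j v))) i fun j hj => ?_ using 1
  · rw [hΦ, map_smul, hP.apply_apply_self]
  · rw [hΦ, map_smul, hP.apply_apply_of_ne hj.symm, smul_zero]

lemma norm_le (hP : OrthogonalDecomposition P) (hΦ : IsDiagonalOperator P b Φ) {C : ℝ}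
    (hC : 0 ≤ C) (hb : ∀ i, ‖b i‖ ≤ C) : ‖Φ‖ ≤ C := by
  refine Φ.opNorm_le_bound hC fun v => ?_
  refine le_of_sq_le_sq ?_ (by positivity)
  rw [mul_pow]
  refine hasSum_le (fun i => ?_) (hP.hasSum_norm_sq (Φ v)) ((hP.hasSum_norm_sq v).mul_left (C ^ 2))
  rw [hΦ.apply_apply hP, norm_smul, mul_pow]
  gcongr
  exact hb i

end Complete

lemma apply_commutator_apply {I' E' : Type*} [NormedAddCommGroup E'] [InnerProductSpace ℂ E']
    [CompleteSpace E'] {P' : I' → E' →L[ℂ] E'} {b' : I' → ℂ} {Ψ' : E' →L[ℂ] E'}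
    (hP' : OrthogonalDecomposition P') (hΨ : IsDiagonalOperator P b Ψ)
    (hΨ' : IsDiagonalOperator P' b' Ψ') (A : E →L[ℂ] E') (i : I) (j : I') (v : E) :
    P' j ((Ψ'.comp A - A.comp Ψ) (P i v)) = (b' j - b i) • P' j (A (P i v)) := by
  rw [sub_apply, ContinuousLinearMap.comp_apply, ContinuousLinearMap.comp_apply, hΨ, map_smul,
    map_sub, hΨ'.apply_apply hP', map_smul, sub_smul]

lemma apply_commutator_sub_comp_sum_apply {I' E' : Type*} [NormedAddCommGroup E']
    [InnerProductSpace ℂ E'] [CompleteSpace E'] [CompleteSpace E] [DecidableEq I]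
    {P' : I' → E' →L[ℂ] E'} {b' : I' → ℂ} {Ψ' : E' →L[ℂ] E'} (hP : OrthogonalDecomposition P)
    (hP' : OrthogonalDecomposition P') (hΨ : IsDiagonalOperator P b Ψ)
    (hΨ' : IsDiagonalOperator P' b' Ψ') (A : E →L[ℂ] E') (S : Finset I) (i : I) (j : I') (v : E) :
    P' j (((Ψ'.comp A - A.comp Ψ) - (Ψ'.comp A - A.comp Ψ).comp (∑ l ∈ S, P l)) (P i v)) =
      if i ∈ S then 0 else (b' j - b i) • P' j (A (P i v)) := by
  rw [sub_apply, ContinuousLinearMap.comp_apply, hP.sum_apply_apply]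
  split_ifs
  · simp
  · rw [map_zero, sub_zero, hΨ.apply_commutator_apply hP' hΨ' A]

end IsDiagonalOperator

lemma OrthogonalDecomposition.exists_isDiagonalOperator {I E : Type*} [NormedAddCommGroup E]
    [InnerProductSpace ℂ E] [CompleteSpace E] {P : I → E →L[ℂ] E}
    (hP : OrthogonalDecomposition P) (b : I → ℂ) {C : ℝ} (hb : ∀ i, ‖b i‖ ≤ C) :
    ∃ Φ : E →L[ℂ] E, IsDiagonalOperator P b Φ := by
  let l (v : E) (i : I) : LinearMap.range (P i : E →ₗ[ℂ] E) :=
    ⟨b i • P i v, Submodule.smul_mem _ _ (LinearMap.mem_range_self _ v)⟩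
  have hl (v : E) (i : I) : ‖l v i‖ ^ 2 ≤ C ^ 2 * ‖P i v‖ ^ 2 := by
    rw [Submodule.coe_norm, norm_smul, mul_pow]
    gcongr
    exact hb i
  have hsum (v : E) : Summable fun i => b i • P i v :=
    (hP.orthogonalFamily.summable_iff_norm_sq_summable (l v)).2 <|
      .of_nonneg_of_le (fun i => by positivity) (hl v) ((hP.hasSum_norm_sq v).summable.mul_left _)
  let Φ₀ : E →ₗ[ℂ] E :=
    { toFun v := ∑' i, b i • P i v
      map_add' v w := by simp only [map_add, smul_add, (hsum v).tsum_add (hsum w)]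
      map_smul' a v := by
        simp only [map_smul, smul_comm (b _) a, (hsum v).tsum_const_smul a, RingHom.id_apply] }
  have hΦ₀ (v : E) : ‖Φ₀ v‖ ≤ |C| * ‖v‖ := by
    refine le_of_tendsto' ((continuous_norm.tendsto _).comp (hsum v).hasSum) fun S => ?_
    refine le_of_sq_le_sq ?_ (by positivity)
    calc ‖∑ i ∈ S, b i • P i v‖ ^ 2 = ∑ i ∈ S, ‖l v i‖ ^ 2 := hP.orthogonalFamily.norm_sum (l v) S
      _ ≤ ∑ i ∈ S, C ^ 2 * ‖P i v‖ ^ 2 := Finset.sum_le_sum fun i _ => hl v i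
      _ ≤ C ^ 2 * ‖v‖ ^ 2 := by
        rw [← Finset.mul_sum]
        gcongr
        exact sum_le_hasSum S (fun i _ => by positivity) (hP.hasSum_norm_sq v)
      _ = (|C| * ‖v‖) ^ 2 := by rw [mul_pow, sq_abs]
  refine ⟨Φ₀.mkContinuous |C| hΦ₀, fun i v => ?_⟩
  change ∑' j, b j • P j (P i v) = b i • P i v
  rw [tsum_eq_single i fun j hj => by rw [hP.apply_apply_of_ne hj, smul_zero], hP.apply_apply_self]

lemma Finset.sum_sq_sum_filter_le {ι κ : Type*} (S : Finset ι) (S' : Finset κ)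
    (R : ι → κ → Prop) [DecidableRel R] (a : ι → ℝ) (N : ℕ)
    (hrow : ∀ j, (S.filter (R · j)).card ≤ N) (hcol : ∀ i, (S'.filter (R i)).card ≤ N) :
    ∑ j ∈ S', (∑ i ∈ S.filter (R · j), a i) ^ 2 ≤ N ^ 2 * ∑ i ∈ S, a i ^ 2 := by
  have hswap : ∑ j ∈ S', ∑ i ∈ S.filter (R · j), a i ^ 2 =
      ∑ i ∈ S, (S'.filter (R i)).card * a i ^ 2 := by
    rw [Finset.sum_comm' (t' := S) (s' := fun i => S'.filter (R i)) fun j i => by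
      simp only [Finset.mem_filter]; tauto]
    simp only [Finset.sum_const, nsmul_eq_mul]
  calc ∑ j ∈ S', (∑ i ∈ S.filter (R · j), a i) ^ 2
      ≤ ∑ j ∈ S', (S.filter (R · j)).card * ∑ i ∈ S.filter (R · j), a i ^ 2 :=
        Finset.sum_le_sum fun j _ => sq_sum_le_card_mul_sum_sq (f := a)
    _ ≤ ∑ j ∈ S', N * ∑ i ∈ S.filter (R · j), a i ^ 2 := by
        gcongr with j
        exact hrow j
    _ = N * ∑ i ∈ S, (S'.filter (R i)).card * a i ^ 2 := by rw [← Finset.mul_sum, hswap]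
    _ ≤ N * ∑ i ∈ S, N * a i ^ 2 := by
        gcongr with i
        exact hcol i
    _ = N ^ 2 * ∑ i ∈ S, a i ^ 2 := by rw [← Finset.mul_sum]; ring

namespace OrthogonalDecomposition

variable {I I' E E' : Type*} [NormedAddCommGroup E] [InnerProductSpace ℂ E] [CompleteSpace E]
  [NormedAddCommGroup E'] [InnerProductSpace ℂ E'] [CompleteSpace E']
  {P : I → E →L[ℂ] E} {P' : I' → E' →L[ℂ] E'}

/-- The Schur test. -/
theorem opNorm_le_of_blocks (hP : OrthogonalDecomposition P) (hP' : OrthogonalDecomposition P')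
    (T : E →L[ℂ] E') (R : I → I' → Prop) [DecidableRel R] {c : ℝ} (hc : 0 ≤ c) (N : ℕ)
    (hzero : ∀ i j v, ¬R i j → P' j (T (P i v)) = 0)
    (hbound : ∀ i j v, R i j → ‖P' j (T (P i v))‖ ≤ c * ‖P i v‖)
    (hrow : ∀ j (S : Finset I), (S.filter (R · j)).card ≤ N)
    (hcol : ∀ i (S' : Finset I'), (S'.filter (R i)).card ≤ N) :
    ‖T‖ ≤ N * c := by
  refine T.opNorm_le_bound (by positivity) fun v => ?_
  have hpartial (S : Finset I) : ‖T (∑ i ∈ S, P i v)‖ ≤ N * c * ‖v‖ := by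
    have hblock (j : I') :
        ‖P' j (T (∑ i ∈ S, P i v))‖ ≤ c * ∑ i ∈ S.filter (R · j), ‖P i v‖ := by
      rw [map_sum, map_sum, ← Finset.sum_filter_of_ne fun i _ h => not_not.1 (mt (hzero i j v) h),
        Finset.mul_sum]
      exact (norm_sum_le _ _).trans <| Finset.sum_le_sum fun i hi =>
        hbound i j v (Finset.mem_filter.1 hi).2
    refine le_of_sq_le_sq ?_ (by positivity)
    refine hasSum_le_of_sum_le (hP'.hasSum_norm_sq _) fun S' => ?_
    calc ∑ j ∈ S', ‖P' j (T (∑ i ∈ S, P i v))‖ ^ 2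
        ≤ ∑ j ∈ S', c ^ 2 * (∑ i ∈ S.filter (R · j), ‖P i v‖) ^ 2 := by
          gcongr with j
          rw [← mul_pow]
          gcongr
          exact hblock j
      _ ≤ c ^ 2 * (N ^ 2 * ‖v‖ ^ 2) := by
          rw [← Finset.mul_sum]
          gcongr
          refine (Finset.sum_sq_sum_filter_le S S' R _ N (hrow · S) (hcol · S')).trans ?_
          gcongr
          exact sum_le_hasSum S (fun i _ => by positivity) (hP.hasSum_norm_sq v)
      _ = (N * c * ‖v‖) ^ 2 := by ring
  exact le_of_tendsto'
    (((continuous_norm.comp T.continuous).tendsto v).comp (hP.hasSum_apply v)) hpartial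

end OrthogonalDecomposition

section CompactOperators

variable {𝕜 E F : Type*} [NontriviallyNormedField 𝕜] [NormedAddCommGroup E] [NormedSpace 𝕜 E]
  [NormedAddCommGroup F] [NormedSpace 𝕜 F]

lemma isCompactOperator_of_forall_exists_norm_sub_le [CompleteSpace F] (T : E →L[𝕜] F)
    (h : ∀ ε > 0, ∃ C : E →L[𝕜] F, IsCompactOperator C ∧ ‖T - C‖ ≤ ε) :
    IsCompactOperator T := by
  refine isClosed_setOfPred_isCompactOperator.closure_subset <|
    Metric.mem_closure_iff.2 fun ε hε => ?_
  obtain ⟨C, hC, hTC⟩ := h (ε / 2) (half_pos hε)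
  exact ⟨C, hC, by rw [dist_eq_norm]; linarith⟩

lemma isCompactOperator_of_finiteDimensional_range [ProperSpace 𝕜] (T : E →L[𝕜] F)
    [FiniteDimensional 𝕜 (LinearMap.range (T : E →ₗ[𝕜] F))] : IsCompactOperator T := by
  have := FiniteDimensional.proper 𝕜 (LinearMap.range (T : E →ₗ[𝕜] F))
  exact (isCompactOperator_of_locallyCompactSpace_dom
    (T.codRestrict _ (LinearMap.mem_range_self (T : E →ₗ[𝕜] F)))).continuous_comp
    continuous_subtype_val

lemma isCompactOperator_sum_of_finiteDimensional_range [ProperSpace 𝕜] {ι : Type*}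
    (S : Finset ι) (T : ι → E →L[𝕜] F)
    (hT : ∀ i, FiniteDimensional 𝕜 (LinearMap.range (T i : E →ₗ[𝕜] F))) :
    IsCompactOperator ⇑(∑ i ∈ S, T i) :=
  Finset.sum_induction _ (fun U : E →L[𝕜] F => IsCompactOperator U)
    (fun U V hU hV => by rw [FunLike.coe_add]; exact hU.add hV)
    isCompactOperator_zero fun i _ => isCompactOperator_of_finiteDimensional_range (T i)

end CompactOperators

lemma norm_commutator_sub_commutator_le {𝕜 E F : Type*} [NontriviallyNormedField 𝕜]
    [NormedAddCommGroup E] [NormedSpace 𝕜 E] [NormedAddCommGroup F] [NormedSpace 𝕜 F]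
    (A : E →L[𝕜] F) (Φ Ψ : E →L[𝕜] E) (Φ' Ψ' : F →L[𝕜] F) :
    ‖(Φ'.comp A - A.comp Φ) - (Ψ'.comp A - A.comp Ψ)‖ ≤ ‖Φ' - Ψ'‖ * ‖A‖ + ‖A‖ * ‖Φ - Ψ‖ := by
  rw [show (Φ'.comp A - A.comp Φ) - (Ψ'.comp A - A.comp Ψ) = (Φ' - Ψ').comp A - A.comp (Φ - Ψ) by
    rw [ContinuousLinearMap.sub_comp, ContinuousLinearMap.comp_sub]; abel]
  exact (norm_sub_le _ _).trans (add_le_add (ContinuousLinearMap.opNorm_comp_le _ _)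
    (ContinuousLinearMap.opNorm_comp_le _ _))

lemma exists_hasCompactSupport_norm_sub_le {X E : Type*} [TopologicalSpace X]
    [NormedAddCommGroup E] [NormedSpace ℝ E] {f : X → E} (hf : Continuous f)
    (hf0 : ∀ ε : ℝ, 0 < ε → IsCompact {x : X | ε ≤ ‖f x‖}) {ε : ℝ} (hε : 0 < ε) :
    ∃ k : X → E, Continuous k ∧ HasCompactSupport k ∧ ∀ x, ‖f x - k x‖ ≤ ε := by
  let χ (x : X) : ℝ := min 1 (max 0 (2 * ‖f x‖ / ε - 1))
  have hχ (x : X) : 0 ≤ χ x ∧ χ x ≤ 1 := ⟨le_min zero_le_one (le_max_left _ _), min_le_left _ _⟩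
  refine ⟨fun x => χ x • f x, ?_, ?_, fun x => ?_⟩
  · exact (continuous_const.min (continuous_const.max
      ((continuous_const.mul (continuous_norm.comp hf)).div_const _ |>.sub continuous_const))).smul
      hf
  · refine .intro' (hf0 (ε / 2) (half_pos hε)) (isClosed_le continuous_const
      (continuous_norm.comp hf)) fun x hx => ?_
    have : 2 * ‖f x‖ / ε - 1 ≤ 0 := by
      rw [Set.mem_ofPred_eq, not_le] at hx
      rw [sub_nonpos, div_le_one hε]
      linarith
    simp [χ, max_eq_left this]
  · rw [show f x - χ x • f x = (1 - χ x) • f x by rw [sub_smul, one_smul], norm_smul,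
      Real.norm_of_nonneg (by linarith [hχ x])]
    by_cases hfx : ‖f x‖ < ε
    · nlinarith [hχ x, norm_nonneg (f x)]
    · have : 1 ≤ 2 * ‖f x‖ / ε - 1 := by
        rw [le_sub_iff_add_le, le_div_iff₀ hε]
        linarith
      simp [χ, max_eq_right (zero_le_one.trans this), min_eq_left this, hε.le]

lemma mem_cthickening_tsupport_of_apply_ne {X E : Type*} [PseudoMetricSpace X] [Zero E]
    {k : X → E} {x x' : X} {r : ℝ} (hk : k x ≠ k x') (hd : dist x x' ≤ r) :
    x ∈ Metric.cthickening r (tsupport k) ∧ x' ∈ Metric.cthickening r (tsupport k) := by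
  by_cases hx : k x = 0
  · have hx' : x' ∈ tsupport k := subset_tsupport k fun h => hk (hx.trans h.symm)
    exact ⟨Metric.mem_cthickening_of_dist_le _ _ _ _ hx' hd,
      Metric.self_subset_cthickening _ hx'⟩
  · have hx : x ∈ tsupport k := subset_tsupport k hx
    exact ⟨Metric.self_subset_cthickening _ hx,
      Metric.mem_cthickening_of_dist_le _ _ _ _ hx (dist_comm x x' ▸ hd)⟩

section ScaledCone

variable {G X : Type*} [Group G] [MetricSpace X]

/-- The `(m, F)`-entourage of the scaled cone `O_τ(X) ⊗ G_{can,max}` for the metric scale. -/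
def ConeClose (m : ℕ) (F : Finset G) (z z' : ℝ≥0 × X × G) : Prop :=
  |(z.1 : ℝ) - (z'.1 : ℝ)| ≤ (m : ℝ) ∧ dist z.2.1 z'.2.1 ≤ (m : ℝ) ∧
    max (z.1 : ℝ) (z'.1 : ℝ) * dist z.2.1 z'.2.1 ≤ (m : ℝ) ∧ z.2.2⁻¹ * z'.2.2 ∈ F

def LocallyUniformlyFinite (Z : Set (ℝ≥0 × X × G)) : Prop :=
  ∀ (B : Set X), IsCompact B → ∀ (m : ℕ) (F : Finset G), ∃ N : ℕ,
    ∀ (s : ℝ≥0) (x : X) (g : G),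
      {z : ℝ≥0 × X × G | z ∈ Z ∧ z.2.1 ∈ B ∧ |(z.1 : ℝ) - (s : ℝ)| ≤ (m : ℝ) ∧
          dist z.2.1 x ≤ (m : ℝ) ∧ max (s : ℝ) (z.1 : ℝ) * dist z.2.1 x ≤ (m : ℝ) ∧
          g⁻¹ * z.2.2 ∈ F}.Finite ∧
      {z : ℝ≥0 × X × G | z ∈ Z ∧ z.2.1 ∈ B ∧ |(z.1 : ℝ) - (s : ℝ)| ≤ (m : ℝ) ∧
          dist z.2.1 x ≤ (m : ℝ) ∧ max (s : ℝ) (z.1 : ℝ) * dist z.2.1 x ≤ (m : ℝ) ∧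
          g⁻¹ * z.2.2 ∈ F}.ncard ≤ N

lemma ConeClose.dist_lt {m : ℕ} {F : Finset G} {z z' : ℝ≥0 × X × G} (h : ConeClose m F z z')
    {t δ : ℝ} (ht : 0 < t) (hm : m < t * δ) (hz : t < z.1) : dist z.2.1 z'.2.1 < δ := by
  by_contra! hδ
  have hmax : t < max (z.1 : ℝ) z'.1 := hz.trans_le (le_max_left _ _)
  have hδ0 : 0 < δ := pos_of_mul_pos_right ((Nat.cast_nonneg m).trans_lt hm) ht.le
  nlinarith [h.2.2.1]

lemma LocallyUniformlyFinite.exists_card_le {Z : Set (ℝ≥0 × X × G)}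
    (hZ : LocallyUniformlyFinite Z) {B : Set X} (hB : IsCompact B) (m : ℕ) (F : Finset G) :
    ∃ N : ℕ, ∀ {W : Set (ℝ≥0 × X × G)}, W ⊆ Z → ∀ (p : ℝ≥0 × X × G) (S : Finset W),
      (∀ z ∈ S, (z : ℝ≥0 × X × G).2.1 ∈ B ∧ (ConeClose m F p z ∨ ConeClose m F z p)) →
        S.card ≤ N := by
  classical
  obtain ⟨N, hN⟩ := hZ B hB m (F ∪ F.image (·⁻¹))
  refine ⟨N, fun hW p S hS => ?_⟩
  obtain ⟨hfin, hcard⟩ := hN p.1 p.2.1 p.2.2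
  refine (Finset.card_le_card_of_injOn (t := hfin.toFinset) Subtype.val (fun z hz => ?_)
    Subtype.val_injective.injOn).trans ((Set.ncard_eq_toFinset_card _ hfin).symm.trans_le hcard)
  obtain ⟨hzB, hclose⟩ := hS z hz
  simp only [Set.Finite.coe_toFinset, Set.mem_ofPred_eq]
  refine ⟨hW z.2, hzB, ?_⟩
  rcases hclose with ⟨h₁, h₂, h₃, h₄⟩ | ⟨h₁, h₂, h₃, h₄⟩
  · rw [abs_sub_comm, dist_comm]
    exact ⟨h₁, h₂, h₃, Finset.mem_union_left _ h₄⟩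
  · rw [max_comm]
    refine ⟨h₁, h₂, h₃, Finset.mem_union_right _ (Finset.mem_image.2 ⟨_, h₄, ?_⟩)⟩
    simp

variable {H H' : Type*} [NormedAddCommGroup H] [InnerProductSpace ℂ H] [CompleteSpace H]
  [NormedAddCommGroup H'] [InnerProductSpace ℂ H'] [CompleteSpace H']

theorem exists_norm_commutator_sub_comp_sum_le [ProperSpace X]
    {D D' : Set (ℝ≥0 × X × G)} {P : D → H →L[ℂ] H} {P' : D' → H' →L[ℂ] H'}
    (hP : OrthogonalDecomposition P) (hP' : OrthogonalDecomposition P')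
    (hD : ∀ (n : ℕ) (B : Set X), IsCompact B → {y : D | (y.1.1 : ℝ) ≤ n ∧ y.1.2.1 ∈ B}.Finite)
    (hluf : LocallyUniformlyFinite (D ∪ D')) {A : H →L[ℂ] H'} {m : ℕ} {F : Finset G}
    (hA : ∀ (y : D) (y' : D'), ¬ConeClose m F y.1 y'.1 → (P' y').comp (A.comp (P y)) = 0)
    {k : X → ℂ} (hk : Continuous k) (hks : HasCompactSupport k)
    {Ψ : H →L[ℂ] H} {Ψ' : H' →L[ℂ] H'} (hΨ : IsDiagonalOperator P (fun y => k y.1.2.1) Ψ)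
    (hΨ' : IsDiagonalOperator P' (fun y' => k y'.1.2.1) Ψ') :
    ∃ N : ℕ, ∀ η > 0, ∃ S : Finset D,
      ‖(Ψ'.comp A - A.comp Ψ) - (Ψ'.comp A - A.comp Ψ).comp (∑ y ∈ S, P y)‖ ≤ N * (η * ‖A‖) := by
  classical
  set B := Metric.cthickening m (tsupport k)
  have hB : IsCompact B := hks.isCompact.cthickening
  obtain ⟨N, hN⟩ := hluf.exists_card_le hB m F
  refine ⟨N, fun η hη => ?_⟩
  obtain ⟨δ, hδ, hkδ⟩ :=
    Metric.uniformContinuous_iff.1 (hks.uniformContinuous_of_continuous hk) η hη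
  obtain ⟨n, hn⟩ := exists_nat_gt (m / δ)
  have hn0 : (0 : ℝ) < n := (div_nonneg (Nat.cast_nonneg m) hδ.le).trans_lt hn
  have hmn : (m : ℝ) < n * δ := by rwa [div_lt_iff₀ hδ] at hn
  set S := (hD n B hB).toFinset
  refine ⟨S, ?_⟩
  let R (y : D) (y' : D') : Prop := y ∉ S ∧ k y'.1.2.1 ≠ k y.1.2.1 ∧ ConeClose m F y.1 y'.1
  have hRB {y y'} (h : R y y') : y.1.2.1 ∈ B ∧ y'.1.2.1 ∈ B :=
    mem_cthickening_tsupport_of_apply_ne h.2.1.symm h.2.2.2.1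
  have hRk {y y'} (h : R y y') : ‖k y'.1.2.1 - k y.1.2.1‖ ≤ η := by
    have hs : (n : ℝ) < y.1.1 := by
      have := h.1
      rw [Set.Finite.mem_toFinset, Set.mem_ofPred_eq, not_and_or, not_le] at this
      exact this.resolve_right (not_not.2 (hRB h).1)
    rw [← dist_eq_norm, dist_comm]
    exact (hkδ (h.2.2.dist_lt hn0 hmn hs)).le
  refine hP.opNorm_le_of_blocks hP' _ R (by positivity) N (fun y y' v h => ?_)
    (fun y y' v h => ?_) (fun y' S₁ => ?_) (fun y S₁' => ?_)
  · rw [hΨ.apply_commutator_sub_comp_sum_apply hP hP' hΨ' A]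
    split_ifs with hyS
    · rfl
    by_cases hkk : k y'.1.2.1 = k y.1.2.1
    · rw [hkk, sub_self, zero_smul]
    · rw [show P' y' (A (P y v)) = 0 from congr($(hA y y' fun hc => h ⟨hyS, hkk, hc⟩) v),
        smul_zero]
  · rw [hΨ.apply_commutator_sub_comp_sum_apply hP hP' hΨ' A, if_neg h.1, norm_smul, mul_assoc]
    exact mul_le_mul (hRk h) ((hP'.norm_apply_le _ _).trans (A.le_opNorm _)) (norm_nonneg _)
      hη.le
  · refine hN Set.subset_union_left y'.1 _ fun z hz => ?_
    simp only [Finset.mem_filter] at hz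
    exact ⟨(hRB hz.2).1, Or.inr hz.2.2.2⟩
  · refine hN Set.subset_union_right y.1 _ fun z hz => ?_
    simp only [Finset.mem_filter] at hz
    exact ⟨(hRB hz.2).2, Or.inl hz.2.2.2⟩

theorem isCompactOperator_commutator_of_hasCompactSupport [ProperSpace X]
    {D D' : Set (ℝ≥0 × X × G)} {P : D → H →L[ℂ] H} {P' : D' → H' →L[ℂ] H'}
    (hP : OrthogonalDecomposition P) (hP' : OrthogonalDecomposition P')
    (hfin : ∀ y : D, FiniteDimensional ℂ (LinearMap.range (P y : H →ₗ[ℂ] H)))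
    (hD : ∀ (n : ℕ) (B : Set X), IsCompact B → {y : D | (y.1.1 : ℝ) ≤ n ∧ y.1.2.1 ∈ B}.Finite)
    (hluf : LocallyUniformlyFinite (D ∪ D')) {A : H →L[ℂ] H'} {m : ℕ} {F : Finset G}
    (hA : ∀ (y : D) (y' : D'), ¬ConeClose m F y.1 y'.1 → (P' y').comp (A.comp (P y)) = 0)
    {k : X → ℂ} (hk : Continuous k) (hks : HasCompactSupport k)
    {Ψ : H →L[ℂ] H} {Ψ' : H' →L[ℂ] H'} (hΨ : IsDiagonalOperator P (fun y => k y.1.2.1) Ψ)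
    (hΨ' : IsDiagonalOperator P' (fun y' => k y'.1.2.1) Ψ') :
    IsCompactOperator (Ψ'.comp A - A.comp Ψ) := by
  obtain ⟨N, hN⟩ := exists_norm_commutator_sub_comp_sum_le hP hP' hD hluf hA hk hks hΨ hΨ'
  refine isCompactOperator_of_forall_exists_norm_sub_le _ fun ε hε => ?_
  obtain ⟨S, hS⟩ := hN (ε / ((N + 1) * (‖A‖ + 1))) (by positivity)
  refine ⟨(Ψ'.comp A - A.comp Ψ).comp (∑ y ∈ S, P y),
    ((isCompactOperator_sum_of_finiteDimensional_range S P hfin).clm_comp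
      (Ψ'.comp A - A.comp Ψ) :), hS.trans ?_⟩
  have hNA : (N : ℝ) * ‖A‖ ≤ (N + 1) * (‖A‖ + 1) := by nlinarith [norm_nonneg A]
  calc (N : ℝ) * (ε / ((N + 1) * (‖A‖ + 1)) * ‖A‖) = ε * (N * ‖A‖ / ((N + 1) * (‖A‖ + 1))) := by
        ring
    _ ≤ ε * 1 := by
        gcongr
        rwa [div_le_one (by positivity)]
    _ = ε := mul_one ε

end ScaledCone

theorem pseudolocality_of_equivariantly_controlled_operators_general
    {G : Type*} [Group G] {X : Type*} [MetricSpace X] [ProperSpace X]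
    {H H' : Type*}
    [NormedAddCommGroup H] [InnerProductSpace ℂ H] [CompleteSpace H]
    [NormedAddCommGroup H'] [InnerProductSpace ℂ H'] [CompleteSpace H']
    (D D' : Set (ℝ≥0 × X × G))
    (P : D → (H →L[ℂ] H)) (P' : D' → (H' →L[ℂ] H'))
    (hP : OrthogonalDecomposition P) (hP' : OrthogonalDecomposition P')
    -- (a) the members of the decompositions are finite-dimensional
    (hfin : ∀ y : D, FiniteDimensional ℂ (LinearMap.range (P y : H →ₗ[ℂ] H)))
    -- (b) local finiteness of the index sets
    (hD : ∀ (n : ℕ) (B : Set X), IsCompact B →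
      {y : D | (y.1.1 : ℝ) ≤ n ∧ y.1.2.1 ∈ B}.Finite)
    -- (c) `D ∪ D'` is locally uniformly finite
    (hluf : ∀ (B : Set X), IsCompact B → ∀ (m : ℕ) (F : Finset G), ∃ N : ℕ,
      ∀ (s : ℝ≥0) (x : X) (g : G),
        {z : ℝ≥0 × X × G | z ∈ D ∪ D' ∧ z.2.1 ∈ B ∧ |(z.1 : ℝ) - (s : ℝ)| ≤ (m : ℝ) ∧
            dist z.2.1 x ≤ (m : ℝ) ∧ max (s : ℝ) (z.1 : ℝ) * dist z.2.1 x ≤ (m : ℝ) ∧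
            g⁻¹ * z.2.2 ∈ F}.Finite ∧
        {z : ℝ≥0 × X × G | z ∈ D ∪ D' ∧ z.2.1 ∈ B ∧ |(z.1 : ℝ) - (s : ℝ)| ≤ (m : ℝ) ∧
            dist z.2.1 x ≤ (m : ℝ) ∧ max (s : ℝ) (z.1 : ℝ) * dist z.2.1 x ≤ (m : ℝ) ∧
            g⁻¹ * z.2.2 ∈ F}.ncard ≤ N)
    (A : H →L[ℂ] H')
    -- `A` is controlled
    (hA : ∃ (m : ℕ) (F : Finset G), ∀ (y : D) (y' : D'),
      ¬(|(y.1.1 : ℝ) - (y'.1.1 : ℝ)| ≤ (m : ℝ) ∧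
          dist y.1.2.1 y'.1.2.1 ≤ (m : ℝ) ∧
          max (y.1.1 : ℝ) (y'.1.1 : ℝ) * dist y.1.2.1 y'.1.2.1 ≤ (m : ℝ) ∧
          y.1.2.2⁻¹ * y'.1.2.2 ∈ F) →
        (P' y').comp (A.comp (P y)) = 0)
    -- `f` is continuous and vanishes at infinity
    (f : X → ℂ) (hf : Continuous f)
    (hf0 : ∀ ε : ℝ, 0 < ε → IsCompact {x : X | ε ≤ ‖f x‖})
    -- the diagonal multiplication operators associated with `f`
    (Φ : H →L[ℂ] H) (Φ' : H' →L[ℂ] H')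
    (hΦ : ∀ (y : D) (v : H), P y v = v → Φ v = f y.1.2.1 • v)
    (hΦ' : ∀ (y' : D') (w : H'), P' y' w = w → Φ' w = f y'.1.2.1 • w) :
    IsCompactOperator ⇑(Φ'.comp A - A.comp Φ) := by
  obtain ⟨m, F, hA⟩ := hA
  have hΦd : IsDiagonalOperator P (fun y => f y.1.2.1) Φ := fun y v =>
    hΦ y _ (hP.apply_apply_self y v)
  have hΦd' : IsDiagonalOperator P' (fun y' => f y'.1.2.1) Φ' := fun y' w =>
    hΦ' y' _ (hP'.apply_apply_self y' w)
  refine isCompactOperator_of_forall_exists_norm_sub_le _ fun ε hε => ?_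
  set ε₁ := ε / (2 * (‖A‖ + 1))
  obtain ⟨k, hk, hks, hfk⟩ := exists_hasCompactSupport_norm_sub_le hf hf0 (ε := ε₁) (by positivity)
  obtain ⟨C, hC⟩ := hk.bounded_above_of_compact_support hks
  obtain ⟨Ψ, hΨ⟩ := hP.exists_isDiagonalOperator (fun y => k y.1.2.1) fun y => hC _
  obtain ⟨Ψ', hΨ'⟩ := hP'.exists_isDiagonalOperator (fun y' => k y'.1.2.1) fun y' => hC _
  refine ⟨Ψ'.comp A - A.comp Ψ,
    isCompactOperator_commutator_of_hasCompactSupport hP hP' hfin hD hluf hA hk hks hΨ hΨ', ?_⟩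
  have hΦΨ := (hΦd.sub hΨ).norm_le hP (by positivity) fun y => hfk _
  have hΦΨ' := (hΦd'.sub hΨ').norm_le hP' (by positivity) fun y' => hfk _
  calc _ ≤ ‖Φ' - Ψ'‖ * ‖A‖ + ‖A‖ * ‖Φ - Ψ‖ := norm_commutator_sub_commutator_le A Φ Ψ Φ' Ψ'
    _ ≤ ε₁ * ‖A‖ + ‖A‖ * ε₁ := by gcongr
    _ ≤ ε := by
      rw [show ε₁ * ‖A‖ + ‖A‖ * ε₁ = ε * (‖A‖ / (‖A‖ + 1)) by simp only [ε₁]; field_simp; ring]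
      exact mul_le_of_le_one_right hε.le ((div_le_one (by positivity)).2 (by linarith))

/-- **Pseudolocality of controlled operators** (Lemma 6.2 of Bunke–Engel–Land, specialized to
trivial coefficients and to the metric scale on a proper metric space): if `A` is a controlled
operator between decomposed Hilbert spaces over the scaled cone `[0,∞) × X × G`, then for every
function `f : X → ℂ` vanishing at infinity the commutator `Φ'(f) ∘ A − A ∘ Φ(f)` is compact. -/
theorem pseudolocality_of_equivariantly_controlled_operators
    {G : Type*} [Group G] {X : Type*} [MetricSpace X] [ProperSpace X]
    [MulAction G X] (hiso : ∀ g : G, Isometry (fun x : X => g • x))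
    {H H' : Type*}
    [NormedAddCommGroup H] [InnerProductSpace ℂ H] [CompleteSpace H]
    [NormedAddCommGroup H'] [InnerProductSpace ℂ H'] [CompleteSpace H']
    (D D' : Set (ℝ≥0 × X × G))
    (P : D → (H →L[ℂ] H)) (P' : D' → (H' →L[ℂ] H'))
    (hP : OrthogonalDecomposition P) (hP' : OrthogonalDecomposition P')
    -- (a) the members of the decompositions are finite-dimensional
    (hfin : ∀ y : D, FiniteDimensional ℂ (LinearMap.range (P y : H →ₗ[ℂ] H)))
    (hfin' : ∀ y' : D', FiniteDimensional ℂ (LinearMap.range (P' y' : H' →ₗ[ℂ] H')))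
    -- (b) local finiteness of the index sets
    (hD : ∀ (n : ℕ) (B : Set X), IsCompact B →
      {y : D | (y.1.1 : ℝ) ≤ n ∧ y.1.2.1 ∈ B}.Finite)
    (hD' : ∀ (n : ℕ) (B : Set X), IsCompact B →
      {y' : D' | (y'.1.1 : ℝ) ≤ n ∧ y'.1.2.1 ∈ B}.Finite)
    -- (c) `D ∪ D'` is locally uniformly finite
    (hluf : ∀ (B : Set X), IsCompact B → ∀ (m : ℕ) (F : Finset G), ∃ N : ℕ,
      ∀ (s : ℝ≥0) (x : X) (g : G),
        {z : ℝ≥0 × X × G | z ∈ D ∪ D' ∧ z.2.1 ∈ B ∧ |(z.1 : ℝ) - (s : ℝ)| ≤ (m : ℝ) ∧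
            dist z.2.1 x ≤ (m : ℝ) ∧ max (s : ℝ) (z.1 : ℝ) * dist z.2.1 x ≤ (m : ℝ) ∧
            g⁻¹ * z.2.2 ∈ F}.Finite ∧
        {z : ℝ≥0 × X × G | z ∈ D ∪ D' ∧ z.2.1 ∈ B ∧ |(z.1 : ℝ) - (s : ℝ)| ≤ (m : ℝ) ∧
            dist z.2.1 x ≤ (m : ℝ) ∧ max (s : ℝ) (z.1 : ℝ) * dist z.2.1 x ≤ (m : ℝ) ∧
            g⁻¹ * z.2.2 ∈ F}.ncard ≤ N)
    (A : H →L[ℂ] H')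
    -- `A` is controlled
    (hA : ∃ (m : ℕ) (F : Finset G), ∀ (y : D) (y' : D'),
      ¬(|(y.1.1 : ℝ) - (y'.1.1 : ℝ)| ≤ (m : ℝ) ∧
          dist y.1.2.1 y'.1.2.1 ≤ (m : ℝ) ∧
          max (y.1.1 : ℝ) (y'.1.1 : ℝ) * dist y.1.2.1 y'.1.2.1 ≤ (m : ℝ) ∧
          y.1.2.2⁻¹ * y'.1.2.2 ∈ F) →
        (P' y').comp (A.comp (P y)) = 0)
    -- `f` is continuous and vanishes at infinity
    (f : X → ℂ) (hf : Continuous f)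
    (hf0 : ∀ ε : ℝ, 0 < ε → IsCompact {x : X | ε ≤ ‖f x‖})
    -- the diagonal multiplication operators associated with `f`
    (Φ : H →L[ℂ] H) (Φ' : H' →L[ℂ] H')
    (hΦ : ∀ (y : D) (v : H), P y v = v → Φ v = f y.1.2.1 • v)
    (hΦ' : ∀ (y' : D') (w : H'), P' y' w = w → Φ' w = f y'.1.2.1 • w) :
    IsCompactOperator ⇑(Φ'.comp A - A.comp Φ) :=
  pseudolocality_of_equivariantly_controlled_operators_general D D' P P' hP hP' hfin hD hluf A hA f
    hf hf0 Φ Φ' hΦ hΦ'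
end

section
/- Let (X,d) be a metric space with an isometric action of a group G, and let (Y_s)_{s∈(0,∞)} be a family of G-invariant subsets of X with the following property: for every m ∈ ℕ and every compact subset B of X there exists C ∈ ℕ such that for all s ∈ (0,∞) and all x ∈ X the set Y_s ∩ B ∩ {y ∈ X : d(y,x) ≤ m·s} has at most C elements. Then for every compact subset B of X, every m ∈ ℕ and every finite subset F of G there exists N ∈ ℕ such that for all s ∈ [0,∞), x ∈ X and g ∈ G the set {(n,y,k) ∈ ℕ × X × G : 1 ≤ n, y ∈ Y_{1/n} ∩ B, |n − s| ≤ m, d(y,x) ≤ m, s·d(y,x) ≤ m, n·d(y,x) ≤ m, and g⁻¹k ∈ F} is finite with at most N elements. -/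
/-!
For fixed `s`, `x` and `g`, a triple `(n, y, k)` of the set has `n` in a window of `2m + 1`
consecutive naturals (from `|n - s| ≤ m`), `y` in the set counted by the hypothesis at scale
`1 / n` (from `n · d(y, x) ≤ m`), and `k ∈ g • F`; so the set has at most `(2m + 1) · C · |F|`
elements, a bound independent of `s`, `x` and `g`.
-/

open scoped Pointwise

theorem Set.finite_and_ncard_le_of_forall_mem_fiber {α β : Type*} {s : Set (α × β)}
    (I : Finset α) (A : α → Set β) {C : ℕ}
    (hs : ∀ p ∈ s, p.1 ∈ I ∧ p.2 ∈ A p.1) (hA : ∀ a ∈ I, (A a).Finite ∧ (A a).ncard ≤ C) :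
    s.Finite ∧ s.ncard ≤ I.card * C := by
  have hsub : s ⊆ ⋃ a ∈ I, {a} ×ˢ A a := fun p hp =>
    Set.mem_biUnion (hs p hp).1 ⟨rfl, (hs p hp).2⟩
  have hfin : (⋃ a ∈ I, {a} ×ˢ A a).Finite :=
    I.finite_toSet.biUnion fun a ha => (Set.finite_singleton a).prod (hA a ha).1
  refine ⟨hfin.subset hsub, ?_⟩
  calc s.ncard ≤ (⋃ a ∈ I, {a} ×ˢ A a).ncard := Set.ncard_le_ncard hsub hfin
    _ ≤ ∑ a ∈ I, ({a} ×ˢ A a).ncard := I.set_ncard_biUnion_le _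
    _ ≤ ∑ _a ∈ I, C := Finset.sum_le_sum fun a ha => by
        simpa only [Set.ncard_prod, Set.ncard_singleton, one_mul] using (hA a ha).2
    _ = I.card * C := by rw [Finset.sum_const, smul_eq_mul]

theorem mem_Icc_of_abs_natCast_sub_le {n m : ℕ} {s : ℝ} (hn : 1 ≤ n) (h : |(n : ℝ) - s| ≤ m) :
    n ∈ Finset.Icc (max 1 ⌈s - m⌉₊) (⌈s - m⌉₊ + 2 * m) := by
  obtain ⟨hlo, hhi⟩ := abs_le.mp h
  refine Finset.mem_Icc.mpr ⟨max_le hn (Nat.ceil_le.mpr (by linarith)), ?_⟩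
  have : (n : ℝ) ≤ ⌈s - m⌉₊ + 2 * m := by linarith [Nat.le_ceil (s - m)]
  exact_mod_cast this

theorem card_Icc_max_le (a b k : ℕ) : (Finset.Icc (max a b) (b + k)).card ≤ k + 1 := by
  rw [Nat.card_Icc]
  omega

theorem locally_uniformly_finite_of_bounded_geometry_general
    {G : Type*} [Group G] {X : Type*} [MetricSpace X]
    (Y : ℝ → Set X)
    (hcount : ∀ (m : ℕ) (B : Set X), IsCompact B → ∃ C : ℕ,
      ∀ (s : ℝ), 0 < s → ∀ x : X,
        {y : X | y ∈ Y s ∧ y ∈ B ∧ dist y x ≤ (m : ℝ) * s}.Finite ∧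
        {y : X | y ∈ Y s ∧ y ∈ B ∧ dist y x ≤ (m : ℝ) * s}.ncard ≤ C) :
    ∀ (B : Set X), IsCompact B → ∀ (m : ℕ) (F : Finset G), ∃ N : ℕ,
      ∀ (s : ℝ), 0 ≤ s → ∀ (x : X) (g : G),
        {z : ℕ × X × G | 1 ≤ z.1 ∧ z.2.1 ∈ Y (1 / (z.1 : ℝ)) ∧ z.2.1 ∈ B ∧
            |(z.1 : ℝ) - s| ≤ (m : ℝ) ∧ dist z.2.1 x ≤ (m : ℝ) ∧
            s * dist z.2.1 x ≤ (m : ℝ) ∧ (z.1 : ℝ) * dist z.2.1 x ≤ (m : ℝ) ∧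
            g⁻¹ * z.2.2 ∈ F}.Finite ∧
        {z : ℕ × X × G | 1 ≤ z.1 ∧ z.2.1 ∈ Y (1 / (z.1 : ℝ)) ∧ z.2.1 ∈ B ∧
            |(z.1 : ℝ) - s| ≤ (m : ℝ) ∧ dist z.2.1 x ≤ (m : ℝ) ∧
            s * dist z.2.1 x ≤ (m : ℝ) ∧ (z.1 : ℝ) * dist z.2.1 x ≤ (m : ℝ) ∧
            g⁻¹ * z.2.2 ∈ F}.ncard ≤ N := by
  classical
  intro B hB m F
  obtain ⟨C, hC⟩ := hcount m B hB
  refine ⟨(2 * m + 1) * (C * F.card), fun s _ x g => ?_⟩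
  refine (Set.finite_and_ncard_le_of_forall_mem_fiber
    (Finset.Icc (max 1 ⌈s - m⌉₊) (⌈s - m⌉₊ + 2 * m))
    (fun n => {y | y ∈ Y (1 / n) ∧ y ∈ B ∧ dist y x ≤ m * (1 / n)} ×ˢ ↑(g • F)) ?_ ?_).imp_right
    fun h => h.trans (Nat.mul_le_mul_right _ (card_Icc_max_le 1 _ (2 * m)))
  · rintro ⟨n, y, k⟩ ⟨hn, hY, hyB, habs, -, -, hnd, hk⟩
    have hdist : dist y x ≤ m * (1 / n) := by
      rw [mul_one_div, le_div_iff₀ (by exact_mod_cast hn)]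
      linarith
    exact ⟨mem_Icc_of_abs_natCast_sub_le hn habs, ⟨hY, hyB, hdist⟩, Finset.inv_smul_mem_iff.mp hk⟩
  · intro n hn
    have hn1 : 1 ≤ n := (le_max_left _ _).trans (Finset.mem_Icc.mp hn).1
    obtain ⟨hfin, hle⟩ := hC (1 / n) (one_div_pos.mpr (Nat.cast_pos.mpr hn1)) x
    refine ⟨hfin.prod (g • F).finite_toSet, ?_⟩
    rw [Set.ncard_prod, Set.ncard_coe_finset, Finset.card_smul_finset]
    exact Nat.mul_le_mul_right _ hle

/-- **Local uniform finiteness of the canonical subset of the scaled cone** (the analytic core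
of Proposition 5.13.1 of Bunke–Engel–Land): if `(Y_s)_{s ∈ (0,∞)}` is a family of `G`-invariant
subsets of a metric `G`-space `X` satisfying the counting condition of locally uniformly
bounded geometry, then the subset `L = {(n, y, k) : n ≥ 1, y ∈ Y_{1/n}, k ∈ G}` of
`O_{τ_d}(X) ⊗ G_{can,max}` is locally uniformly finite. -/
theorem locally_uniformly_finite_of_bounded_geometry
    {G : Type*} [Group G] {X : Type*} [MetricSpace X]
    [MulAction G X] (hiso : ∀ g : G, Isometry (fun x : X => g • x))
    (Y : ℝ → Set X)
    (hinv : ∀ (g : G) (s : ℝ), 0 < s → ∀ x ∈ Y s, g • x ∈ Y s)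
    (hcount : ∀ (m : ℕ) (B : Set X), IsCompact B → ∃ C : ℕ,
      ∀ (s : ℝ), 0 < s → ∀ x : X,
        {y : X | y ∈ Y s ∧ y ∈ B ∧ dist y x ≤ (m : ℝ) * s}.Finite ∧
        {y : X | y ∈ Y s ∧ y ∈ B ∧ dist y x ≤ (m : ℝ) * s}.ncard ≤ C) :
    ∀ (B : Set X), IsCompact B → ∀ (m : ℕ) (F : Finset G), ∃ N : ℕ,
      ∀ (s : ℝ), 0 ≤ s → ∀ (x : X) (g : G),
        {z : ℕ × X × G | 1 ≤ z.1 ∧ z.2.1 ∈ Y (1 / (z.1 : ℝ)) ∧ z.2.1 ∈ B ∧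
            |(z.1 : ℝ) - s| ≤ (m : ℝ) ∧ dist z.2.1 x ≤ (m : ℝ) ∧
            s * dist z.2.1 x ≤ (m : ℝ) ∧ (z.1 : ℝ) * dist z.2.1 x ≤ (m : ℝ) ∧
            g⁻¹ * z.2.2 ∈ F}.Finite ∧
        {z : ℕ × X × G | 1 ≤ z.1 ∧ z.2.1 ∈ Y (1 / (z.1 : ℝ)) ∧ z.2.1 ∈ B ∧
            |(z.1 : ℝ) - s| ≤ (m : ℝ) ∧ dist z.2.1 x ≤ (m : ℝ) ∧
            s * dist z.2.1 x ≤ (m : ℝ) ∧ (z.1 : ℝ) * dist z.2.1 x ≤ (m : ℝ) ∧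
            g⁻¹ * z.2.2 ∈ F}.ncard ≤ N :=
  locally_uniformly_finite_of_bounded_geometry_general Y hcount
end

section
/- Let G be a group acting by homeomorphisms on locally compact Hausdorff topological spaces X and Y, and assume that both actions are properly discontinuous and cocompact. Then every continuous G-equivariant map f : X → Y is proper: for every compact subset K of Y the preimage f⁻¹(K) is compact. -/
/-!
Cover `X` by the translates `g • B` of a compact set `B`. A point `g • b` lies over a compact
`K ⊆ Y` only if `g` carries the point `f b` of the compact set `f '' B` into `K`; by proper
discontinuity of the action on `Y` only finitely many `g` do so. Hence `f ⁻¹' K` is a closed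
subset of a finite union of compact translates of `B`.
-/

open scoped Pointwise

section

variable {G X Y : Type*} [Group G] [MulAction G X] [MulAction G Y]

theorem finite_setOf_smul_mem_of_mem [TopologicalSpace Y]
    (hYpd : ∀ K : Set Y, IsCompact K → {g : G | ∃ y ∈ K, g • y ∈ K}.Finite)
    {C K : Set Y} (hC : IsCompact C) (hK : IsCompact K) :
    {g : G | ∃ y ∈ C, g • y ∈ K}.Finite :=
  (hYpd _ (hC.union hK)).subset fun _ ⟨y, hy, hgy⟩ => ⟨y, Or.inl hy, Or.inr hgy⟩

theorem preimage_subset_biUnion_smul_of_equivariant {B : Set X}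
    (hB : ∀ x : X, ∃ g : G, ∃ b ∈ B, g • b = x) {f : X → Y}
    (hfe : ∀ (g : G) (x : X), f (g • x) = g • f x) (K : Set Y) :
    f ⁻¹' K ⊆ ⋃ g ∈ {g : G | ∃ y ∈ f '' B, g • y ∈ K}, g • B := by
  intro x hx
  obtain ⟨g, b, hb, rfl⟩ := hB x
  have hgb : g • f b ∈ K := hfe g b ▸ hx
  exact Set.mem_biUnion ⟨f b, Set.mem_image_of_mem f hb, hgb⟩ (Set.smul_mem_smul_set hb)

theorem isCompact_preimage_of_equivariant [TopologicalSpace X] [ContinuousConstSMul G X]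
    [TopologicalSpace Y] [T2Space Y]
    (hYpd : ∀ K : Set Y, IsCompact K → {g : G | ∃ y ∈ K, g • y ∈ K}.Finite)
    {B : Set X} (hBc : IsCompact B) (hB : ∀ x : X, ∃ g : G, ∃ b ∈ B, g • b = x)
    {f : X → Y} (hfc : Continuous f) (hfe : ∀ (g : G) (x : X), f (g • x) = g • f x)
    {K : Set Y} (hK : IsCompact K) :
    IsCompact (f ⁻¹' K) :=
  have hcover : IsCompact (⋃ g ∈ {g : G | ∃ y ∈ f '' B, g • y ∈ K}, g • B) :=
    (finite_setOf_smul_mem_of_mem hYpd (hBc.image hfc) hK).isCompact_biUnion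
      fun g _ => hBc.smul g
  hcover.of_isClosed_subset (hK.isClosed.preimage hfc)
    (preimage_subset_biUnion_smul_of_equivariant hB hfe K)

end

theorem equivariant_continuous_map_is_proper_general
    {G : Type*} [Group G] {X Y : Type*}
    [TopologicalSpace X]
    [TopologicalSpace Y] [T2Space Y]
    [MulAction G X] [MulAction G Y]
    (hXcont : ∀ g : G, Continuous fun x : X => g • x)
    -- the actions are properly discontinuous
    (hYpd : ∀ K : Set Y, IsCompact K → {g : G | ∃ y ∈ K, g • y ∈ K}.Finite)
    -- the actions are cocompact
    (hXcc : ∃ B : Set X, IsCompact B ∧ ∀ x : X, ∃ g : G, ∃ b ∈ B, g • b = x)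
    (f : X → Y) (hfc : Continuous f)
    (hfe : ∀ (g : G) (x : X), f (g • x) = g • f x) :
    ∀ K : Set Y, IsCompact K → IsCompact (f ⁻¹' K) := by
  have : ContinuousConstSMul G X := ⟨hXcont⟩
  obtain ⟨B, hBc, hB⟩ := hXcc
  exact fun K hK => isCompact_preimage_of_equivariant hYpd hBc hB hfc hfe hK

/-- **Properness of equivariant maps between proper cocompact `G`-spaces** (the properness part
of Lemma 11.2 of Bunke–Engel–Land): a continuous `G`-equivariant map between locally compact
Hausdorff spaces carrying properly discontinuous cocompact actions of a group `G` by
homeomorphisms is proper. -/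
theorem equivariant_continuous_map_is_proper
    {G : Type*} [Group G] {X Y : Type*}
    [TopologicalSpace X] [LocallyCompactSpace X] [T2Space X]
    [TopologicalSpace Y] [LocallyCompactSpace Y] [T2Space Y]
    [MulAction G X] [MulAction G Y]
    (hXcont : ∀ g : G, Continuous fun x : X => g • x)
    (hYcont : ∀ g : G, Continuous fun y : Y => g • y)
    -- the actions are properly discontinuous
    (hXpd : ∀ K : Set X, IsCompact K → {g : G | ∃ x ∈ K, g • x ∈ K}.Finite)
    (hYpd : ∀ K : Set Y, IsCompact K → {g : G | ∃ y ∈ K, g • y ∈ K}.Finite)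
    -- the actions are cocompact
    (hXcc : ∃ B : Set X, IsCompact B ∧ ∀ x : X, ∃ g : G, ∃ b ∈ B, g • b = x)
    (hYcc : ∃ B : Set Y, IsCompact B ∧ ∀ y : Y, ∃ g : G, ∃ b ∈ B, g • b = y)
    (f : X → Y) (hfc : Continuous f)
    (hfe : ∀ (g : G) (x : X), f (g • x) = g • f x) :
    ∀ K : Set Y, IsCompact K → IsCompact (f ⁻¹' K) :=
  equivariant_continuous_map_is_proper_general hXcont hYpd hXcc f hfc hfe
end

section
/- Let X be a uniform space with an action of a group G whose uniformity has an invariant entourage basis, and assume that the orbit space X/G, equipped with the quotient topology coming from the uniform topology of X, is compact. Then every G-invariant open subset U of X × X which contains the diagonal is an entourage of X. -/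
/-!
For each point `x` choose an invariant entourage `W x` such that `W x`-close pairs near `x` lie
in `U`. The open map `X → X/G` sends the balls `ball x (W x)` to neighbourhoods covering the
compact orbit space, so finitely many of them suffice: every point can be translated into one of
finitely many balls `ball i (W i)`. The intersection of these finitely many `W i` is an
entourage, and by the invariance of the `W i` and of `U` it lies in `U`.
-/

open Set Filter Topology Uniformity UniformSpace

section InvariantEntourages

variable {G X : Type*} [Group G] [UniformSpace X] [MulAction G X]

theorem uniformContinuousConstSMul_of_invariant_basis
    (hbasis : ∀ V ∈ 𝓤 X, ∃ W ∈ 𝓤 X, W ⊆ V ∧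
      ∀ (g : G) (x y : X), (x, y) ∈ W → (g • x, g • y) ∈ W) :
    UniformContinuousConstSMul G X where
  uniformContinuous_const_smul g V hV := by
    obtain ⟨W, hW, hWV, hWinv⟩ := hbasis V hV
    exact mem_map.2 (mem_of_superset hW fun p hp => hWV (hWinv g p.1 p.2 hp))

theorem exists_invariant_entourage_of_mem_nhds_diagonal
    (hbasis : ∀ V ∈ 𝓤 X, ∃ W ∈ 𝓤 X, W ⊆ V ∧
      ∀ (g : G) (x y : X), (x, y) ∈ W → (g • x, g • y) ∈ W)
    {U : Set (X × X)} {x : X} (hU : U ∈ 𝓝 (x, x)) :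
    ∃ W ∈ 𝓤 X, (∀ (g : G) (y z : X), (y, z) ∈ W → (g • y, g • z) ∈ W) ∧
      ∀ y z, (x, y) ∈ W → (y, z) ∈ W → (y, z) ∈ U := by
  obtain ⟨V, ⟨hV, -⟩, hVU⟩ := (hasBasis_nhds_prod x x).mem_iff.1 hU
  obtain ⟨Z, hZ, hZV⟩ := comp_mem_uniformity_sets hV
  obtain ⟨W, hW, hWZ, hWinv⟩ := hbasis Z hZ
  have hWWV : SetRel.comp W W ⊆ V := (SetRel.comp_subset_comp hWZ hWZ).trans hZV
  refine ⟨W, hW, hWinv, fun y z hxy hyz => hVU ⟨?_, ?_⟩⟩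
  · exact hWWV (SetRel.prodMk_mem_comp hxy (refl_mem_uniformity hW))
  · exact hWWV (SetRel.prodMk_mem_comp hxy hyz)

end InvariantEntourages

theorem exists_finset_forall_exists_smul_mem_of_compactSpace_orbitRel
    {G X : Type*} [Group G] [TopologicalSpace X] [MulAction G X] [ContinuousConstSMul G X]
    [CompactSpace (Quotient (MulAction.orbitRel G X))] (N : X → Set X) (hN : ∀ x, N x ∈ 𝓝 x) :
    ∃ t : Finset X, ∀ y : X, ∃ i ∈ t, ∃ g : G, g • y ∈ N i := by
  let := MulAction.orbitRel G X
  obtain ⟨t, ht⟩ := isCompact_univ.elim_finite_subcover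
    (fun x => (Quotient.mk' '' interior (N x) : Set (Quotient (MulAction.orbitRel G X))))
    (fun x => isOpenMap_quotient_mk'_mul _ isOpen_interior)
    (fun q _ => q.inductionOn' fun x =>
      mem_iUnion.2 ⟨x, x, mem_interior_iff_mem_nhds.2 (hN x), rfl⟩)
  refine ⟨t, fun y => ?_⟩
  obtain ⟨i, hi, y', hy', hy'y⟩ := mem_iUnion₂.1 (ht (mem_univ (Quotient.mk' y)))
  obtain ⟨g, rfl⟩ : y' ∈ MulAction.orbit G y := Quotient.eq''.mp hy'y
  exact ⟨i, hi, g, interior_subset hy'⟩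

/-- **Invariant open neighbourhoods of the diagonal are entourages** (the key claim in the
proof of Lemma 11.2 of Bunke–Engel–Land): if a group `G` acts on a uniform space `X` whose
uniformity admits a basis of `G`-invariant entourages, and if the orbit space `X/G` with the
quotient topology is compact, then every `G`-invariant open subset of `X × X` containing the
diagonal belongs to the uniformity of `X`. -/
theorem invariant_open_nhd_of_diagonal_is_entourage
    {G : Type*} [Group G] {X : Type*} [UniformSpace X] [MulAction G X]
    -- the uniformity of `X` has an invariant entourage basis
    (hbasis : ∀ V ∈ uniformity X, ∃ W ∈ uniformity X, W ⊆ V ∧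
      ∀ (g : G) (x y : X), (x, y) ∈ W → (g • x, g • y) ∈ W)
    -- the orbit space is compact
    (hcompact : CompactSpace (Quotient (MulAction.orbitRel G X)))
    (U : Set (X × X)) (hUopen : IsOpen U)
    (hUinv : ∀ (g : G) (x y : X), (x, y) ∈ U → (g • x, g • y) ∈ U)
    (hUdiag : ∀ x : X, (x, x) ∈ U) :
    U ∈ uniformity X := by
  have := uniformContinuousConstSMul_of_invariant_basis hbasis
  choose W hW hWinv hWU using fun x =>
    exists_invariant_entourage_of_mem_nhds_diagonal hbasis (hUopen.mem_nhds (hUdiag x))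
  obtain ⟨t, ht⟩ := exists_finset_forall_exists_smul_mem_of_compactSpace_orbitRel (G := G)
    (fun x => ball x (W x)) fun x => ball_mem_nhds x (hW x)
  refine mem_of_superset ((biInter_finset_mem t).2 fun i _ => hW i) ?_
  rintro ⟨y, z⟩ hyz
  obtain ⟨i, hi, g, hg⟩ := ht y
  have hgyz := hWU i _ _ hg (hWinv i g y z (mem_iInter₂.1 hyz i hi))
  simpa using hUinv g⁻¹ _ _ hgyz
end

section
/- Let G be a group acting by homeomorphisms on a topological space X, and assume the action is properly discontinuous and cocompact. Let L be a subset of [0,∞) × X × G which is invariant under the action g • (s,x,k) := (s, g•x, g·k). Then the following are equivalent: (1) for every n ∈ ℕ and every compact subset K of X the set {(s,x,k) ∈ L : s ≤ n and x ∈ K} is finite; (2) for every n ∈ ℕ the set {(s,x,k) ∈ L : s ≤ n and k = 1} is finite. -/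
open scoped NNReal

/-!
An invariant set `M ⊆ T × X × G` is determined by its slice over `1 ∈ G`, since
`(t, x, k) ∈ M ↔ (t, k⁻¹ • x, 1) ∈ M`. Hence the part of `M` over a compact `K ⊆ X` is the image
of (slice over `1`) × (the finitely many `k` moving a point of the slice into `K`), and
conversely the slice over `1` is the image of the part of `M` over a fundamental set `B`.
-/

section InvariantSlices

variable {T G X : Type*} [Group G] [MulAction G X] {M : Set (T × X × G)}

theorem finite_of_finite_identity_slice [TopologicalSpace X]
    (hpd : ∀ K : Set X, IsCompact K → {g : G | ∃ x ∈ K, g • x ∈ K}.Finite)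
    (hM : ∀ g : G, ∀ z ∈ M, (z.1, g • z.2.1, g * z.2.2) ∈ M)
    (h1 : {z | z ∈ M ∧ z.2.2 = 1}.Finite) {K : Set X} (hK : IsCompact K) :
    {z | z ∈ M ∧ z.2.1 ∈ K}.Finite := by
  set Y := (fun z : T × X × G => z.2.1) '' {z | z ∈ M ∧ z.2.2 = 1}
  have hΓ := hpd (K ∪ Y) (hK.union (h1.image _).isCompact)
  refine ((h1.prod hΓ).image fun p => (p.1.1, p.2 • p.1.2.1, p.2)).subset ?_
  rintro ⟨t, x, k⟩ ⟨hz, hx⟩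
  have hslice : (t, k⁻¹ • x, (1 : G)) ∈ {z | z ∈ M ∧ z.2.2 = 1} :=
    ⟨by simpa using hM k⁻¹ _ hz, rfl⟩
  exact ⟨((t, k⁻¹ • x, 1), k),
    ⟨hslice, k⁻¹ • x, Or.inr ⟨_, hslice, rfl⟩, by simpa using Or.inl hx⟩, by simp⟩

theorem finite_identity_slice_of_finite
    (hM : ∀ g : G, ∀ z ∈ M, (z.1, g • z.2.1, g * z.2.2) ∈ M)
    {B : Set X} (hB : ∀ x : X, ∃ g : G, ∃ b ∈ B, g • b = x)
    (hMB : {z | z ∈ M ∧ z.2.1 ∈ B}.Finite) :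
    {z | z ∈ M ∧ z.2.2 = 1}.Finite := by
  refine (hMB.image fun z => (z.1, z.2.2⁻¹ • z.2.1, (1 : G))).subset ?_
  rintro ⟨t, x, k⟩ ⟨hz, rfl : k = 1⟩
  obtain ⟨g, b, hb, rfl⟩ := hB x
  exact ⟨(t, b, g⁻¹), ⟨by simpa using hM g⁻¹ _ hz, hb⟩, by simp⟩

end InvariantSlices

theorem invariant_subset_locally_finite_iff_general
    {G : Type*} [Group G] {X : Type*} [TopologicalSpace X]
    [MulAction G X]
    -- the action is properly discontinuous
    (hpd : ∀ K : Set X, IsCompact K → {g : G | ∃ x ∈ K, g • x ∈ K}.Finite)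
    -- the action is cocompact
    (hcc : ∃ B : Set X, IsCompact B ∧ ∀ x : X, ∃ g : G, ∃ b ∈ B, g • b = x)
    (L : Set (ℝ≥0 × X × G))
    (hinv : ∀ (g : G), ∀ z ∈ L, ((z : ℝ≥0 × X × G).1, g • z.2.1, g * z.2.2) ∈ L) :
    (∀ (n : ℕ) (K : Set X), IsCompact K →
        {z : ℝ≥0 × X × G | z ∈ L ∧ (z.1 : ℝ) ≤ n ∧ z.2.1 ∈ K}.Finite) ↔
      (∀ n : ℕ, {z : ℝ≥0 × X × G | z ∈ L ∧ (z.1 : ℝ) ≤ n ∧ z.2.2 = 1}.Finite) := by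
  have hinv_le (n : ℕ) : ∀ g : G, ∀ z ∈ {z : ℝ≥0 × X × G | z ∈ L ∧ (z.1 : ℝ) ≤ n},
      (z.1, g • z.2.1, g * z.2.2) ∈ {z : ℝ≥0 × X × G | z ∈ L ∧ (z.1 : ℝ) ≤ n} :=
    fun g z hz => ⟨hinv g z hz.1, hz.2⟩
  simp only [← and_assoc]
  constructor
  · intro h1 n
    obtain ⟨B, hB, hBcover⟩ := hcc
    exact finite_identity_slice_of_finite (hinv_le n) hBcover (h1 n B hB)
  · intro h2 n K hK
    exact finite_of_finite_identity_slice hpd (hinv_le n) (h2 n) hK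

/-- **Continuous equivalence of the two cones** (Lemma 11.25 of Bunke–Engel–Land): for a
properly discontinuous cocompact action of `G` on `X` by homeomorphisms and a `G`-invariant
subset `L` of `[0,∞) × X × G`, local finiteness with respect to the bornology of
`O(X) ⊗ G_{can,max}` (condition (1)) is equivalent to local finiteness with respect to the
bornology of `O(X_{B_max}) ⊗ G_{can,min}` (condition (2)). -/
theorem invariant_subset_locally_finite_iff
    {G : Type*} [Group G] {X : Type*} [TopologicalSpace X]
    [MulAction G X] (hcont : ∀ g : G, Continuous fun x : X => g • x)
    -- the action is properly discontinuous
    (hpd : ∀ K : Set X, IsCompact K → {g : G | ∃ x ∈ K, g • x ∈ K}.Finite)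
    -- the action is cocompact
    (hcc : ∃ B : Set X, IsCompact B ∧ ∀ x : X, ∃ g : G, ∃ b ∈ B, g • b = x)
    (L : Set (ℝ≥0 × X × G))
    (hinv : ∀ (g : G), ∀ z ∈ L, ((z : ℝ≥0 × X × G).1, g • z.2.1, g * z.2.2) ∈ L) :
    (∀ (n : ℕ) (K : Set X), IsCompact K →
        {z : ℝ≥0 × X × G | z ∈ L ∧ (z.1 : ℝ) ≤ n ∧ z.2.1 ∈ K}.Finite) ↔
      (∀ n : ℕ, {z : ℝ≥0 × X × G | z ∈ L ∧ (z.1 : ℝ) ≤ n ∧ z.2.2 = 1}.Finite) :=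
  invariant_subset_locally_finite_iff_general hpd hcc L hinv
end

section
/- Let H and H' be complex Hilbert spaces and A : H → H' a bounded operator. Let (T_k)_{k∈K} be a family of bounded operators on H such that Σ_{k∈K'} T_k T_k* ≤ 1 (in the order on self-adjoint operators) for every finite subset K' of K, and let (S_l)_{l∈L} be a family of bounded operators on H' such that Σ_{l∈L'} S_l* S_l ≤ 1 for every finite subset L' of L. Then for all finite subsets K' ⊆ K and L' ⊆ L and every family (ξ_k)_{k∈K'} of vectors of H one has Σ_{l∈L'} ‖Σ_{k∈K'} S_l A T_k ξ_k‖² ≤ ‖A‖² · Σ_{k∈K'} ‖ξ_k‖². -/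
/-!
The vector `x = Σₖ Tₖ ξₖ` absorbs the inner sum, so the left-hand side is `Σₗ ‖Sₗ (A x)‖²`.
The column condition `Σ Sₗ* Sₗ ≤ 1` bounds this by `‖A x‖² ≤ ‖A‖² ‖x‖²`, and the row condition
`Σ Tₖ Tₖ* ≤ 1`, which is the column condition for the adjoints `Tₖ*`, together with
Cauchy–Schwarz bounds `‖x‖²` by `Σₖ ‖ξₖ‖²`.
-/

open scoped InnerProductSpace

section

variable {ι 𝕜 E F : Type*} [RCLike 𝕜]
  [NormedAddCommGroup E] [InnerProductSpace 𝕜 E] [CompleteSpace E]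
  [NormedAddCommGroup F] [InnerProductSpace 𝕜 F] [CompleteSpace F]

theorem sum_norm_apply_sq_le_of_isPositive (B : ι → E →L[𝕜] F) (s : Finset ι)
    (hB : (1 - ∑ i ∈ s, (ContinuousLinearMap.adjoint (B i)).comp (B i)).IsPositive) (y : E) :
    ∑ i ∈ s, ‖B i y‖ ^ 2 ≤ ‖y‖ ^ 2 := by
  have hy := hB.re_inner_nonneg_right y
  simp only [sub_apply, one_apply_eq_self, sum_apply, ContinuousLinearMap.comp_apply,
    inner_sub_right, inner_sum, ContinuousLinearMap.adjoint_inner_right, map_sub, map_sum,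
    inner_self_eq_norm_sq] at hy
  linarith

theorem norm_sum_apply_sq_le_of_isPositive (T : ι → E →L[𝕜] F) (s : Finset ι)
    (hT : (1 - ∑ i ∈ s, (T i).comp (ContinuousLinearMap.adjoint (T i))).IsPositive)
    (ξ : ι → E) :
    ‖∑ i ∈ s, T i (ξ i)‖ ^ 2 ≤ ∑ i ∈ s, ‖ξ i‖ ^ 2 := by
  set x := ∑ i ∈ s, T i (ξ i)
  have hadj : ∑ i ∈ s, ‖ContinuousLinearMap.adjoint (T i) x‖ ^ 2 ≤ ‖x‖ ^ 2 :=
    sum_norm_apply_sq_le_of_isPositive (fun i ↦ ContinuousLinearMap.adjoint (T i)) s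
      (by simpa only [ContinuousLinearMap.adjoint_adjoint] using hT) x
  have hx : ‖x‖ ^ 2 ≤ ∑ i ∈ s, ‖ξ i‖ * ‖ContinuousLinearMap.adjoint (T i) x‖ := by
    calc ‖x‖ ^ 2 = RCLike.re ⟪x, x⟫_𝕜 := (inner_self_eq_norm_sq x).symm
      _ = RCLike.re ⟪∑ i ∈ s, T i (ξ i), x⟫_𝕜 := rfl
      _ = ∑ i ∈ s, RCLike.re ⟪ξ i, ContinuousLinearMap.adjoint (T i) x⟫_𝕜 := by
        simp only [sum_inner, map_sum, ContinuousLinearMap.adjoint_inner_right]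
      _ ≤ _ := Finset.sum_le_sum fun i _ ↦ re_inner_le_norm _ _
  have hξ : 0 ≤ ∑ i ∈ s, ‖ξ i‖ ^ 2 := Finset.sum_nonneg fun i _ ↦ sq_nonneg _
  have hsq : (‖x‖ ^ 2) ^ 2 ≤ (∑ i ∈ s, ‖ξ i‖ ^ 2) * ‖x‖ ^ 2 :=
    calc (‖x‖ ^ 2) ^ 2 ≤ (∑ i ∈ s, ‖ξ i‖ * ‖ContinuousLinearMap.adjoint (T i) x‖) ^ 2 := by
          gcongr
      _ ≤ (∑ i ∈ s, ‖ξ i‖ ^ 2) * ∑ i ∈ s, ‖ContinuousLinearMap.adjoint (T i) x‖ ^ 2 :=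
          Finset.sum_mul_sq_le_sq_mul_sq s _ _
      _ ≤ _ := by gcongr
  rcases (sq_nonneg ‖x‖).eq_or_lt with h0 | hpos
  · rw [← h0]; exact hξ
  · rw [sq] at hsq; exact le_of_mul_le_mul_right hsq hpos

end

/-- **Row–column factorization estimate** (the computation in the proof of Proposition 10.5.1
of Bunke–Engel–Land showing that the multiplication functor is norm-bounded in the regular
representation): if `Σ T_k T_k* ≤ 1` over all finite subfamilies and `Σ S_l* S_l ≤ 1` over all
finite subfamilies, then for all finite index sets and all vectors `ξ_k` one has
`Σ_l ‖Σ_k S_l A T_k ξ_k‖² ≤ ‖A‖² Σ_k ‖ξ_k‖²`. -/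
theorem row_column_factorization_estimate
    {K L : Type*} {H H' : Type*}
    [NormedAddCommGroup H] [InnerProductSpace ℂ H] [CompleteSpace H]
    [NormedAddCommGroup H'] [InnerProductSpace ℂ H'] [CompleteSpace H']
    (A : H →L[ℂ] H')
    (T : K → (H →L[ℂ] H)) (S : L → (H' →L[ℂ] H'))
    (hT : ∀ K' : Finset K,
      (1 - ∑ k ∈ K', (T k).comp (ContinuousLinearMap.adjoint (T k))).IsPositive)
    (hS : ∀ L' : Finset L,
      (1 - ∑ l ∈ L', (ContinuousLinearMap.adjoint (S l)).comp (S l)).IsPositive) :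
    ∀ (K' : Finset K) (L' : Finset L) (ξ : K → H),
      ∑ l ∈ L', ‖∑ k ∈ K', S l (A (T k (ξ k)))‖ ^ 2 ≤
        ‖A‖ ^ 2 * ∑ k ∈ K', ‖ξ k‖ ^ 2 := by
  intro K' L' ξ
  set x := ∑ k ∈ K', T k (ξ k)
  calc ∑ l ∈ L', ‖∑ k ∈ K', S l (A (T k (ξ k)))‖ ^ 2 = ∑ l ∈ L', ‖S l (A x)‖ ^ 2 := by
        simp only [x, map_sum]
    _ ≤ ‖A x‖ ^ 2 := sum_norm_apply_sq_le_of_isPositive S L' (hS L') (A x)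
    _ ≤ (‖A‖ * ‖x‖) ^ 2 := by gcongr; exact A.le_opNorm x
    _ ≤ ‖A‖ ^ 2 * ∑ k ∈ K', ‖ξ k‖ ^ 2 := by
        rw [mul_pow]; gcongr; exact norm_sum_apply_sq_le_of_isPositive T K' (hT K') ξ
end
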